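/- The function S₁(w) = S(w+1) satisfies the functional equation S₁(2w) = S₁(w) − 1 for every w ∈ ℍ; equivalently, S(2w + 1) = S(w + 1) − 1 for all w ∈ ℍ. -/

import Mathlib

/-- `e(w) = exp(2πiw)`. -/
noncomputable def e (w : ℂ) : ℂ := Complex.exp (2 * Real.pi * Complex.I * w)

/-- The Fredholm series `f(z) = ∑_{n=0}^∞ z^{2^n}`. -/
noncomputable def f (z : ℂ) : ℂ := ∑' n : ℕ, z ^ (2 ^ n)

/-- `F(w) = f(e(w)) = ∑_{n=0}^∞ e(2^n w)` on the upper half-plane. -/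
noncomputable def F (w : ℂ) : ℂ := ∑' n : ℕ, e ((2 ^ n : ℕ) * w)

/-- `G(w) = ∑_{l=1}^∞ e(−1/2^l)(e(w/2^l) − 1)` (indexing: `l = l' + 1`, `l' : ℕ`). -/
noncomputable def G (w : ℂ) : ℂ :=
  ∑' l : ℕ, e (-(1 / 2 ^ (l + 1))) * (e (w / 2 ^ (l + 1)) - 1)

/-- `S = F + G` on the upper half-plane. -/
noncomputable def S (w : ℂ) : ℂ := F w + G w

/-- The upper half-plane `ℍ = {w : ℂ | Im w > 0}`. -/
def UHP : Set ℂ := {w : ℂ | 0 < w.im}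

/-- `V = S(ℍ)`, the image of `S` on the upper half-plane. -/
noncomputable def V : Set ℂ := S '' UHP

/-!
The shift `w ↦ w + 1` fixes every term of `F`, and `w ↦ 2w + 1` turns `F(w)` into `F(w) - e(w)`
by dropping its first term. In `G` the same two substitutions make the `l`-th terms
`e(w/2^l) - e(-1/2^(l+1))` and `e(w/2^(l+1)) - e(-1/2^(l+1))`, so `G(2w+1) - G(w+1)` telescopes to
`e(w) - lim e(w/2^l) = e(w) - 1`; the two `e(w)` cancel.
-/

open Filter Topology

theorem tsum_sub_succ_eq_sub {M : Type*} [AddCommGroup M] [TopologicalSpace M]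
    [IsTopologicalAddGroup M] [T2Space M] {u : ℕ → M} {a : M}
    (h : Summable fun n ↦ u n - a) : ∑' n, (u n - u (n + 1)) = u 0 - a := by
  have h_succ : Summable fun n ↦ u (n + 1) - a := (summable_nat_add_iff 1).mpr h
  calc ∑' n, (u n - u (n + 1)) = ∑' n, ((u n - a) - (u (n + 1) - a)) := by
        simp only [sub_sub_sub_cancel_right]
    _ = (∑' n, (u n - a)) - ∑' n, (u (n + 1) - a) := h.tsum_sub h_succ
    _ = u 0 - a := by rw [h.tsum_eq_zero_add]; abel

lemma e_add (a b : ℂ) : e (a + b) = e a * e b := by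
  simp only [e, mul_add, Complex.exp_add]

lemma e_natCast_mul (n : ℕ) (w : ℂ) : e (n * w) = e w ^ n := by
  rw [e, e, ← Complex.exp_nat_mul]
  ring_nf

lemma e_natCast (n : ℕ) : e n = 1 := by
  rw [e, mul_comm]
  exact Complex.exp_nat_mul_two_pi_mul_I n

lemma e_add_natCast (w : ℂ) (n : ℕ) : e (w + n) = e w := by
  rw [e_add, e_natCast, mul_one]

lemma norm_e (w : ℂ) : ‖e w‖ = Real.exp (-(2 * Real.pi * w.im)) := by
  simp [e, Complex.norm_exp, Complex.mul_re]

lemma norm_e_ofReal (x : ℝ) : ‖e x‖ = 1 := by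
  simp [norm_e]

lemma norm_e_lt_one {w : ℂ} (hw : 0 < w.im) : ‖e w‖ < 1 := by
  rw [norm_e, Real.exp_lt_one_iff, neg_lt_zero]
  positivity

lemma summable_e_two_pow_mul {w : ℂ} (hw : 0 < w.im) :
    Summable fun n : ℕ ↦ e ((2 ^ n : ℕ) * w) := by
  refine Summable.of_norm_bounded (summable_geometric_of_lt_one (norm_nonneg _) (norm_e_lt_one hw))
    fun n ↦ ?_
  rw [e_natCast_mul, norm_pow]
  exact pow_le_pow_of_le_one (norm_nonneg _) (norm_e_lt_one hw).le Nat.lt_two_pow_self.le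

lemma summable_e_div_two_pow_sub_one (w : ℂ) : Summable fun n : ℕ ↦ e (w / 2 ^ n) - 1 := by
  have h_bigO : (fun z ↦ e z - 1) =O[𝓝 0] id := by
    have h_diff : DifferentiableAt ℂ e 0 := by unfold e; fun_prop
    have h := h_diff.isBigO_sub
    rw [show e 0 = 1 by simp [e]] at h
    simp only [sub_zero] at h
    exact h
  have h_geom : Summable fun n : ℕ ↦ w / 2 ^ n := by
    simpa [div_eq_mul_inv] using
      (summable_geometric_of_norm_lt_one (by norm_num : ‖(2 : ℂ)⁻¹‖ < 1)).mul_left w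
  exact h_bigO.comp_summable h_geom

lemma summable_G_term (w : ℂ) :
    Summable fun l : ℕ ↦ e (-(1 / 2 ^ (l + 1))) * (e (w / 2 ^ (l + 1)) - 1) := by
  refine .of_norm (((summable_nat_add_iff 1).mpr (summable_e_div_two_pow_sub_one w)).norm.congr
    fun l ↦ ?_)
  have h_unit : ‖e (-(1 / 2 ^ (l + 1)))‖ = 1 := by
    simpa using norm_e_ofReal (-(1 / 2 ^ (l + 1)))
  rw [norm_mul, h_unit, one_mul]

lemma F_add_one (w : ℂ) : F (w + 1) = F w :=
  tsum_congr fun n ↦ by rw [mul_add, mul_one, e_add_natCast]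

lemma F_two_mul_add_one {w : ℂ} (hw : 0 < w.im) : F (2 * w + 1) = F w - e w := by
  have h_shift : ∀ n : ℕ, e ((2 ^ n : ℕ) * (2 * w)) = e ((2 ^ (n + 1) : ℕ) * w) := fun n ↦ by
    push_cast; ring_nf
  rw [F_add_one, F, tsum_congr h_shift, F, (summable_e_two_pow_mul hw).tsum_eq_zero_add]
  simp

lemma G_term_two_mul_add_one (w : ℂ) (l : ℕ) :
    e (-(1 / 2 ^ (l + 1))) * (e ((2 * w + 1) / 2 ^ (l + 1)) - 1) =
      e (w / 2 ^ l) - e (-(1 / 2 ^ (l + 1))) := by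
  rw [mul_sub, mul_one, ← e_add]
  congr 2
  field_simp
  ring

lemma G_term_add_one (w : ℂ) (l : ℕ) :
    e (-(1 / 2 ^ (l + 1))) * (e ((w + 1) / 2 ^ (l + 1)) - 1) =
      e (w / 2 ^ (l + 1)) - e (-(1 / 2 ^ (l + 1))) := by
  rw [mul_sub, mul_one, ← e_add]
  congr 2
  field_simp
  ring

lemma G_two_mul_add_one_sub_G_add_one (w : ℂ) : G (2 * w + 1) - G (w + 1) = e w - 1 := by
  rw [G, G, ← (summable_G_term _).tsum_sub (summable_G_term _)]
  simp_rw [G_term_two_mul_add_one, G_term_add_one, sub_sub_sub_cancel_right]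
  simpa using tsum_sub_succ_eq_sub (summable_e_div_two_pow_sub_one w)

/-- `S₁(w) = S(w+1)` satisfies `S₁(2w) = S₁(w) − 1`, i.e. `S(2w+1) = S(w+1) − 1` on `ℍ`. -/
theorem S_one_functional_equation (w : ℂ) (hw : w ∈ UHP) :
    S (2 * w + 1) = S (w + 1) - 1 := by
  rw [S, S, F_two_mul_add_one hw, F_add_one]
  linear_combination G_two_mul_add_one_sub_G_add_one w
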